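/- Let A ∈ ℝ^{m×n} have rank n, let x* solve AᵀA x* = Aᵀ b, and let E ∈ ℝ^{m×n} with ε = ‖E‖/‖A‖, and suppose x̂ ≠ 0 satisfies (A+E)ᵀ(A+E) x̂ = (A+E)ᵀ b. Then ‖x̂ − x*‖/‖x̂‖ ≤ κ(A)² · ε · ( ‖b − A x̂‖/(‖A‖·‖x̂‖) + 1 + ε ). -/

import Mathlib

/-!
Subtracting the two systems of normal equations gives, with `r = b - A x̂`,
`AᵀA (x̂ - x*) = Eᵀ r - AᵀE x̂ - EᵀE x̂`, whose right-hand side has norm at most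
`‖E‖ (‖r‖ + (‖A‖ + ‖E‖) ‖x̂‖)`. Since `A† A†ᵀ = (AᵀA)⁻¹`, inverting `AᵀA` costs a factor
`‖A†‖² = κ(A)² / ‖A‖²`; dividing by `‖x̂‖` and writing `‖E‖ = ε ‖A‖` gives the bound.
-/

open Matrix

/-- Spectral (operator 2-) norm of a real matrix. -/
noncomputable def spNorm {m n : ℕ} (M : Matrix (Fin m) (Fin n) ℝ) : ℝ :=
  ‖LinearMap.toContinuousLinearMap (Matrix.toEuclideanLin M)‖

/-- Euclidean 2-norm of a real vector. -/
noncomputable def vNorm {n : ℕ} (x : Fin n → ℝ) : ℝ :=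
  ‖(WithLp.equiv 2 (Fin n → ℝ)).symm x‖

/-- Moore–Penrose left inverse of a full column rank matrix. -/
noncomputable def pinv {m n : ℕ} (A : Matrix (Fin m) (Fin n) ℝ) : Matrix (Fin n) (Fin m) ℝ :=
  (Aᵀ * A)⁻¹ * Aᵀ

/-- Condition number with respect to left inversion. -/
noncomputable def kappa {m n : ℕ} (A : Matrix (Fin m) (Fin n) ℝ) : ℝ :=
  spNorm A * spNorm (pinv A)

open scoped Matrix.Norms.L2Operator

section

variable {m n : ℕ}

theorem spNorm_eq_norm (M : Matrix (Fin m) (Fin n) ℝ) : spNorm M = ‖M‖ := rfl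

theorem vNorm_mulVec_le (M : Matrix (Fin m) (Fin n) ℝ) (x : Fin n → ℝ) :
    vNorm (M *ᵥ x) ≤ ‖M‖ * vNorm x :=
  M.l2_opNorm_mulVec (WithLp.toLp 2 x)

theorem vNorm_sub_le (u v : Fin n → ℝ) : vNorm (u - v) ≤ vNorm u + vNorm v :=
  norm_sub_le (WithLp.toLp 2 u) (WithLp.toLp 2 v)

theorem vNorm_nonneg (x : Fin n → ℝ) : 0 ≤ vNorm x :=
  norm_nonneg _

theorem vNorm_pos {x : Fin n → ℝ} (hx : x ≠ 0) : 0 < vNorm x := by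
  simpa [vNorm] using hx

theorem l2_opNorm_transpose (M : Matrix (Fin m) (Fin n) ℝ) : ‖Mᵀ‖ = ‖M‖ :=
  M.l2_opNorm_conjTranspose

theorem vNorm_perturbation_le (A E : Matrix (Fin m) (Fin n) ℝ) (r : Fin m → ℝ) (x : Fin n → ℝ) :
    vNorm (Eᵀ *ᵥ r - Aᵀ *ᵥ (E *ᵥ x) - Eᵀ *ᵥ (E *ᵥ x)) ≤
      ‖E‖ * (vNorm r + (‖A‖ + ‖E‖) * vNorm x) := by
  have hr := vNorm_mulVec_le Eᵀ r
  have hAE := (vNorm_mulVec_le Aᵀ (E *ᵥ x)).trans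
    (mul_le_mul_of_nonneg_left (vNorm_mulVec_le E x) (norm_nonneg _))
  have hEE := (vNorm_mulVec_le Eᵀ (E *ᵥ x)).trans
    (mul_le_mul_of_nonneg_left (vNorm_mulVec_le E x) (norm_nonneg _))
  have htri := (vNorm_sub_le _ (Eᵀ *ᵥ (E *ᵥ x))).trans
    (add_le_add_left (vNorm_sub_le (Eᵀ *ᵥ r) (Aᵀ *ᵥ (E *ᵥ x))) _)
  rw [l2_opNorm_transpose] at hr hAE hEE
  linarith

theorem isUnit_of_rank_eq_card {ι K : Type*} [Fintype ι] [DecidableEq ι] [Field K]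
    {M : Matrix ι ι K} (hM : M.rank = Fintype.card ι) : IsUnit M := by
  rw [← Matrix.mulVec_surjective_iff_isUnit]
  have : LinearMap.range M.mulVecLin = ⊤ :=
    Submodule.eq_top_of_finrank_eq (by rw [← Matrix.rank, hM, Module.finrank_fintype_fun_eq_card])
  exact LinearMap.range_eq_top.mp this

variable {A : Matrix (Fin m) (Fin n) ℝ}

theorem isUnit_det_transpose_mul_self (hA : A.rank = n) : IsUnit (Aᵀ * A).det :=
  (Matrix.isUnit_iff_isUnit_det _).mp <|
    isUnit_of_rank_eq_card (by rw [Matrix.rank_transpose_mul_self, hA, Fintype.card_fin])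

theorem pinv_mul_self (hA : A.rank = n) : pinv A * A = 1 := by
  rw [pinv, Matrix.mul_assoc, Matrix.nonsing_inv_mul _ (isUnit_det_transpose_mul_self hA)]

theorem pinv_mul_transpose_pinv (hA : A.rank = n) : pinv A * (pinv A)ᵀ = (Aᵀ * A)⁻¹ := by
  rw [pinv, Matrix.transpose_mul, Matrix.transpose_nonsing_inv, Matrix.transpose_mul,
    Matrix.transpose_transpose, Matrix.mul_assoc, ← Matrix.mul_assoc Aᵀ,
    Matrix.mul_nonsing_inv _ (isUnit_det_transpose_mul_self hA), Matrix.mul_one]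

theorem norm_inv_transpose_mul_self_le (hA : A.rank = n) : ‖(Aᵀ * A)⁻¹‖ ≤ ‖pinv A‖ ^ 2 := by
  rw [← pinv_mul_transpose_pinv hA]
  calc _ ≤ ‖pinv A‖ * ‖(pinv A)ᵀ‖ := Matrix.l2_opNorm_mul _ _
    _ = _ := by rw [l2_opNorm_transpose, sq]

theorem norm_pos_of_rank_eq [NeZero n] (hA : A.rank = n) : 0 < ‖A‖ := by
  refine norm_pos_iff.mpr fun h ↦ (one_ne_zero : (1 : Matrix (Fin n) (Fin n) ℝ) ≠ 0) ?_
  rw [← pinv_mul_self hA, h, Matrix.mul_zero]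

variable {E : Matrix (Fin m) (Fin n) ℝ} {b : Fin m → ℝ} {xs xh : Fin n → ℝ}

theorem transpose_mul_self_mulVec_sub (hxs : (Aᵀ * A) *ᵥ xs = Aᵀ *ᵥ b)
    (hxh : ((A + E)ᵀ * (A + E)) *ᵥ xh = (A + E)ᵀ *ᵥ b) :
    (Aᵀ * A) *ᵥ (xh - xs) = Eᵀ *ᵥ (b - A *ᵥ xh) - Aᵀ *ᵥ (E *ᵥ xh) - Eᵀ *ᵥ (E *ᵥ xh) := by
  simp only [Matrix.transpose_add, ← Matrix.mulVec_mulVec, Matrix.add_mulVec, Matrix.mulVec_add,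
    Matrix.mulVec_sub] at hxs hxh ⊢
  rw [hxs]
  linear_combination hxh

theorem sub_eq_inv_mulVec (hA : A.rank = n) (hxs : (Aᵀ * A) *ᵥ xs = Aᵀ *ᵥ b)
    (hxh : ((A + E)ᵀ * (A + E)) *ᵥ xh = (A + E)ᵀ *ᵥ b) :
    xh - xs = (Aᵀ * A)⁻¹ *ᵥ (Eᵀ *ᵥ (b - A *ᵥ xh) - Aᵀ *ᵥ (E *ᵥ xh) - Eᵀ *ᵥ (E *ᵥ xh)) := by
  rw [← transpose_mul_self_mulVec_sub hxs hxh, Matrix.mulVec_mulVec,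
    Matrix.nonsing_inv_mul _ (isUnit_det_transpose_mul_self hA), Matrix.one_mulVec]

end

theorem stmt_5 {m n : ℕ} (A E : Matrix (Fin m) (Fin n) ℝ) (b : Fin m → ℝ)
    (xs xh : Fin n → ℝ) (hA : A.rank = n)
    (ε : ℝ) (hε : ε = spNorm E / spNorm A)
    (hxs : (Aᵀ * A) *ᵥ xs = Aᵀ *ᵥ b)
    (hxh : ((A + E)ᵀ * (A + E)) *ᵥ xh = (A + E)ᵀ *ᵥ b)
    (hne : xh ≠ 0) :
    vNorm (xh - xs) / vNorm xh ≤
      kappa A ^ 2 * ε * (vNorm (b - A *ᵥ xh) / (spNorm A * vNorm xh) + 1 + ε) := by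
  have : NeZero n := ⟨by rintro rfl; exact hne (Subsingleton.elim _ _)⟩
  have hA_pos := norm_pos_of_rank_eq hA
  have hxh_pos := vNorm_pos hne
  have hbound : vNorm (xh - xs) ≤
      ‖pinv A‖ ^ 2 * (‖E‖ * (vNorm (b - A *ᵥ xh) + (‖A‖ + ‖E‖) * vNorm xh)) := by
    rw [sub_eq_inv_mulVec hA hxs hxh]
    exact (vNorm_mulVec_le _ _).trans <| mul_le_mul (norm_inv_transpose_mul_self_le hA)
      (vNorm_perturbation_le A E _ xh) (vNorm_nonneg _) (sq_nonneg _)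
  have hrhs : kappa A ^ 2 * ε * (vNorm (b - A *ᵥ xh) / (spNorm A * vNorm xh) + 1 + ε) =
      ‖pinv A‖ ^ 2 * (‖E‖ * (vNorm (b - A *ᵥ xh) + (‖A‖ + ‖E‖) * vNorm xh)) / vNorm xh := by
    simp only [hε, kappa, spNorm_eq_norm]
    field_simp
    ring
  rw [hrhs]
  exact div_le_div_of_nonneg_right hbound hxh_pos.le
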